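/- Let the polynomials pₙ(x) be defined by F(x,w) = Σ_{n≥0} pₙ(x)wⁿ, where F is analytic in w at w = 0 and F(x,0) = 1. Let A, B, C be complex numbers independent of w with B ≠ 0, and define cₖ(x) by e^{−Aw/(Bw−1)}(1−Bw)^{C+1} F(x,w) = Σ_{k≥0} cₖ(x)wᵏ. Then pₙ(x) = Bⁿ Σ_{k=0}^n (cₖ(x)/Bᵏ) L_{n−k}^{(C)}(ξ) with ξ = A/B, where Lₘ^{(C)} are the Laguerre polynomials. -/

import Mathlib

/-!
With ξ = A/B, the Laguerre generating function evaluated at argument Bw is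
(1 - Bw)^{-C-1} e^{-Bwξ/(1-Bw)}, the exact reciprocal of the prefactor e^{-Aw/(Bw-1)}(1-Bw)^{C+1}.
Multiplying the series Σ cₖ wᵏ by Σ L_m^{(C)}(ξ) Bᵐ wᵐ therefore gives a second power series for F
near 0, with Cauchy-product coefficients Σₖ cₖ B^{n-k} L_{n-k}^{(C)}(ξ); uniqueness of power series
coefficients identifies them with pₙ.
-/

open Filter Topology Finset

section PowerSeries

variable {𝕜 : Type*}

theorem hasFPowerSeriesAt_ofScalars_of_eventually_hasSum [NontriviallyNormedField 𝕜]
    {a : ℕ → 𝕜} {f : 𝕜 → 𝕜} (h : ∀ᶠ w in 𝓝 (0 : 𝕜), HasSum (fun m => a m * w ^ m) (f w)) :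
    HasFPowerSeriesAt f (FormalMultilinearSeries.ofScalars 𝕜 a) 0 := by
  rw [hasFPowerSeriesAt_iff]
  filter_upwards [h] with w hw
  simpa [FormalMultilinearSeries.coeff_ofScalars, mul_comm] using hw

theorem eq_of_eventually_hasSum_pow [NontriviallyNormedField 𝕜] {a b : ℕ → 𝕜} {f : 𝕜 → 𝕜}
    (ha : ∀ᶠ w in 𝓝 (0 : 𝕜), HasSum (fun m => a m * w ^ m) (f w))
    (hb : ∀ᶠ w in 𝓝 (0 : 𝕜), HasSum (fun m => b m * w ^ m) (f w)) : a = b := by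
  funext m
  have h := (hasFPowerSeriesAt_ofScalars_of_eventually_hasSum ha).eq_formalMultilinearSeries
    (hasFPowerSeriesAt_ofScalars_of_eventually_hasSum hb)
  simpa [FormalMultilinearSeries.coeff_ofScalars] using congrArg (·.coeff m) h

theorem HasSum.mul_pow_cauchy [RCLike 𝕜] {a b : ℕ → 𝕜} {w x y : 𝕜}
    (ha : HasSum (fun k => a k * w ^ k) x) (hb : HasSum (fun k => b k * w ^ k) y) :
    HasSum (fun n => (∑ k ∈ range (n + 1), a k * b (n - k)) * w ^ n) (x * y) := by
  have h := hasSum_sum_range_mul_of_summable_norm (summable_norm_iff (E := 𝕜).2 ha.summable)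
    (summable_norm_iff (E := 𝕜).2 hb.summable)
  rw [ha.tsum_eq, hb.tsum_eq] at h
  convert h using 2 with n
  rw [sum_mul]
  refine sum_congr rfl fun k hk => ?_
  rw [← pow_mul_pow_sub w (mem_range_succ_iff.1 hk)]
  ring

end PowerSeries

noncomputable def laguerreGenFun (α x w : ℂ) : ℂ :=
  (1 - w) ^ (-α - 1) * Complex.exp (-w * x / (1 - w))

theorem exp_mul_cpow_mul_laguerreGenFun {A B C w : ℂ} (hB : B ≠ 0) (hw : 1 - B * w ≠ 0) :
    Complex.exp (-A * w / (B * w - 1)) * (1 - B * w) ^ (C + 1) *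
      laguerreGenFun C (A / B) (B * w) = 1 := by
  have hcpow : (1 - B * w) ^ (C + 1) * (1 - B * w) ^ (-C - 1) = 1 := by
    rw [show -C - 1 = -(C + 1) by ring, Complex.cpow_neg,
      mul_inv_cancel₀ (by simp [Complex.cpow_eq_zero_iff, hw])]
  have hexp : -A * w / (B * w - 1) + -(B * w) * (A / B) / (1 - B * w) = 0 := by
    rw [show B * w - 1 = -(1 - B * w) by ring]
    field_simp
    ring
  calc _ = ((1 - B * w) ^ (C + 1) * (1 - B * w) ^ (-C - 1)) *
        Complex.exp (-A * w / (B * w - 1) + -(B * w) * (A / B) / (1 - B * w)) := by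
          rw [laguerreGenFun, Complex.exp_add]; ring
    _ = 1 := by rw [hcpow, hexp, Complex.exp_zero, one_mul]

theorem stmt_9_general (Lag : ℂ → ℕ → ℂ → ℂ)
    (hLag : ∀ (α x w : ℂ), ‖w‖ < 1 → HasSum (fun m => Lag α m x * w ^ m)
      ((1 - w) ^ (-α - 1) * Complex.exp (-w * x / (1 - w))))
    (f : ℂ → ℂ) (p : ℕ → ℂ)
    (hF : ∀ᶠ w in 𝓝 (0:ℂ), HasSum (fun m => p m * w ^ m) (f w))
    (A B C : ℂ) (hB : B ≠ 0)
    (c : ℕ → ℂ)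
    (hc : ∀ᶠ w in 𝓝 (0:ℂ), HasSum (fun k => c k * w ^ k)
      (Complex.exp (-A * w / (B * w - 1)) * (1 - B * w) ^ (C + 1) * f w))
    (n : ℕ) :
    p n = B ^ n * ∑ k ∈ Finset.range (n + 1), c k / B ^ k * Lag C (n - k) (A / B) := by
  have hsmall : ∀ᶠ w in 𝓝 (0:ℂ), ‖B * w‖ < 1 :=
    ((continuous_const.mul continuous_id).norm.tendsto' 0 0 (by simp)).eventually_lt_const one_pos
  have hexpand : ∀ᶠ w in 𝓝 (0:ℂ), HasSum
      (fun m => (∑ k ∈ range (m + 1), c k * (Lag C (m - k) (A / B) * B ^ (m - k))) * w ^ m)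
      (f w) := by
    filter_upwards [hc, hsmall] with w hcw hw
    have hLw : HasSum (fun m => Lag C m (A / B) * B ^ m * w ^ m)
        (laguerreGenFun C (A / B) (B * w)) := by
      simpa only [mul_pow, mul_assoc, laguerreGenFun] using hLag C (A / B) (B * w) hw
    have hw1 : 1 - B * w ≠ 0 := fun h => by simp [← sub_eq_zero.1 h] at hw
    simpa only [mul_right_comm _ (f w), exp_mul_cpow_mul_laguerreGenFun hB hw1, one_mul]
      using hcw.mul_pow_cauchy hLw
  rw [congrFun (eq_of_eventually_hasSum_pow hF hexpand) n, mul_sum]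
  refine sum_congr rfl fun k hk => ?_
  rw [pow_sub₀ B hB (mem_range_succ_iff.1 hk)]
  field_simp

/-- Lemma 3.1: if `F(w) = Σ pₙ wⁿ` with `p₀ = 1` and
`e^{-Aw/(Bw-1)}(1-Bw)^{C+1} F(w) = Σ cₖ wᵏ`, then
`pₙ = Bⁿ Σ_{k=0}^n (cₖ/Bᵏ) L_{n-k}^{(C)}(A/B)`. -/
theorem stmt_9 (Lag : ℂ → ℕ → ℂ → ℂ)
    (hLag : ∀ (α x w : ℂ), ‖w‖ < 1 → HasSum (fun m => Lag α m x * w ^ m)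
      ((1 - w) ^ (-α - 1) * Complex.exp (-w * x / (1 - w))))
    (f : ℂ → ℂ) (p : ℕ → ℂ)
    (hF : ∀ᶠ w in 𝓝 (0:ℂ), HasSum (fun m => p m * w ^ m) (f w))
    (hp0 : p 0 = 1)
    (A B C : ℂ) (hB : B ≠ 0)
    (c : ℕ → ℂ)
    (hc : ∀ᶠ w in 𝓝 (0:ℂ), HasSum (fun k => c k * w ^ k)
      (Complex.exp (-A * w / (B * w - 1)) * (1 - B * w) ^ (C + 1) * f w))
    (n : ℕ) :
    p n = B ^ n * ∑ k ∈ Finset.range (n + 1), c k / B ^ k * Lag C (n - k) (A / B) :=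
  stmt_9_general Lag hLag f p hF A B C hB c hc n
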